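/- The second derivative of f_{AL}(x) = (x+1)/2 - (x-1)/ln x (for x > 0, x ≠ 1) equals ((x+1)ln x - 2(x-1))/(x²(ln x)³), and this is positive for all x > 0, x ≠ 1. -/

import Mathlib

noncomputable def fAL (x : ℝ) : ℝ := (x + 1) / 2 - (x - 1) / Real.log x

open Real Set Filter Topology

/-! The formula is the quotient rule applied twice. Its sign is that of `N x * log x`, where
`N x = (x + 1) log x - 2 (x - 1)` is the numerator: `N 1 = 0` and `N' x = log x + 1/x - 1 > 0`
for `x ≠ 1` (this is `log t < t - 1` at `t = 1/x`), so `N` is strictly increasing on `(0, ∞)`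
and changes sign at `1`, exactly as `log` does. -/

noncomputable def fALDeriv (x : ℝ) : ℝ := 1 / 2 - (log x - (x - 1) / x) / log x ^ 2

noncomputable def fALNumerator (x : ℝ) : ℝ := (x + 1) * log x - 2 * (x - 1)

lemma hasDerivAt_fAL {x : ℝ} (hx : 0 < x) (hx1 : x ≠ 1) : HasDerivAt fAL (fALDeriv x) x := by
  have hquot : HasDerivAt (fun y ↦ (y - 1) / log y) ((1 * log x - (x - 1) * x⁻¹) / log x ^ 2) x :=
    ((hasDerivAt_id' x).sub_const 1).div (hasDerivAt_log hx.ne') (log_ne_zero_of_pos_of_ne_one hx hx1)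
  refine ((((hasDerivAt_id' x).add_const 1).div_const 2).sub hquot).congr_deriv ?_
  rw [fALDeriv]
  field_simp

lemma deriv_fAL_eventuallyEq {x : ℝ} (hx : 0 < x) (hx1 : x ≠ 1) : deriv fAL =ᶠ[𝓝 x] fALDeriv := by
  filter_upwards [eventually_gt_nhds hx, eventually_ne_nhds hx1] with y hy hy1
  exact (hasDerivAt_fAL hy hy1).deriv

lemma hasDerivAt_fALDeriv {x : ℝ} (hx : 0 < x) (hx1 : x ≠ 1) :
    HasDerivAt fALDeriv (fALNumerator x / (x ^ 2 * log x ^ 3)) x := by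
  have hlog := log_ne_zero_of_pos_of_ne_one hx hx1
  have hnum : HasDerivAt (fun y ↦ log y - (y - 1) / y) (x⁻¹ - (1 * x - (x - 1) * 1) / x ^ 2) x :=
    (hasDerivAt_log hx.ne').sub (((hasDerivAt_id' x).sub_const 1).div (hasDerivAt_id' x) hx.ne')
  have hden : HasDerivAt (fun y ↦ log y ^ 2) (↑2 * log x ^ 1 * x⁻¹) x :=
    (hasDerivAt_log hx.ne').pow 2
  refine ((hasDerivAt_const x (1 / 2 : ℝ)).sub (hnum.div hden (pow_ne_zero 2 hlog))).congr_deriv ?_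
  rw [fALNumerator]
  field_simp
  ring

lemma hasDerivAt_fALNumerator {x : ℝ} (hx : 0 < x) :
    HasDerivAt fALNumerator (log x + x⁻¹ - 1) x := by
  refine ((((hasDerivAt_id' x).add_const 1).mul (hasDerivAt_log hx.ne')).sub
    (((hasDerivAt_id' x).sub_const 1).const_mul 2)).congr_deriv ?_
  field_simp
  ring

lemma log_add_inv_sub_one_pos {x : ℝ} (hx : 0 < x) (hx1 : x ≠ 1) : 0 < log x + x⁻¹ - 1 := by
  have := log_lt_sub_one_of_pos (inv_pos.mpr hx) (inv_ne_one.mpr hx1)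
  rw [log_inv] at this
  linarith

lemma strictMonoOn_fALNumerator_of_one_notMem_interior {D : Set ℝ} (hD : Convex ℝ D)
    (hD0 : D ⊆ Ioi 0) (hD1 : 1 ∉ interior D) : StrictMonoOn fALNumerator D :=
  strictMonoOn_of_hasDerivWithinAt_pos hD
    (fun _ hy ↦ (hasDerivAt_fALNumerator (hD0 hy)).continuousAt.continuousWithinAt)
    (fun _ hy ↦ (hasDerivAt_fALNumerator (hD0 (interior_subset hy))).hasDerivWithinAt)
    (fun _ hy ↦ log_add_inv_sub_one_pos (hD0 (interior_subset hy)) (ne_of_mem_of_not_mem hy hD1))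

-- `N'` vanishes at `1`, so strict monotonicity is glued from `(0, 1]` and `[1, ∞)`.
lemma strictMonoOn_fALNumerator : StrictMonoOn fALNumerator (Ioi 0) := by
  have hleft := strictMonoOn_fALNumerator_of_one_notMem_interior (convex_Ioc 0 1)
    Ioc_subset_Ioi_self (by simp)
  have hright := strictMonoOn_fALNumerator_of_one_notMem_interior (convex_Ici 1)
    (Ici_subset_Ioi.mpr one_pos) (by simp)
  rw [← Ioc_union_Ici_eq_Ioi zero_lt_one]
  exact hleft.union hright (isGreatest_Ioc zero_lt_one) isLeast_Ici

lemma fALNumerator_mul_log_pos {x : ℝ} (hx : 0 < x) (hx1 : x ≠ 1) :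
    0 < fALNumerator x * log x := by
  have hN1 : fALNumerator 1 = 0 := by simp [fALNumerator]
  have h1 : (1 : ℝ) ∈ Ioi 0 := mem_Ioi.mpr one_pos
  rcases hx1.lt_or_gt with h | h
  · have hN : fALNumerator x < 0 := hN1 ▸ strictMonoOn_fALNumerator hx h1 h
    exact mul_pos_of_neg_of_neg hN (log_neg hx h)
  · have hN : 0 < fALNumerator x := hN1 ▸ strictMonoOn_fALNumerator h1 hx h
    exact mul_pos hN (log_pos h)

lemma deriv_deriv_fAL {x : ℝ} (hx : 0 < x) (hx1 : x ≠ 1) :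
    deriv (deriv fAL) x = fALNumerator x / (x ^ 2 * log x ^ 3) :=
  (deriv_fAL_eventuallyEq hx hx1).deriv_eq.trans (hasDerivAt_fALDeriv hx hx1).deriv

lemma fALNumerator_div_pos {x : ℝ} (hx : 0 < x) (hx1 : x ≠ 1) :
    0 < fALNumerator x / (x ^ 2 * log x ^ 3) := by
  have hlog := log_ne_zero_of_pos_of_ne_one hx hx1
  have hden : x ^ 2 * log x ^ 3 = x ^ 2 * log x ^ 4 / log x := by field_simp
  rw [hden, div_div_eq_mul_div]
  exact div_pos (fALNumerator_mul_log_pos hx hx1) (by positivity)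

theorem fAL_second_deriv (x : ℝ) (hx : 0 < x) (hx1 : x ≠ 1) :
    deriv (deriv fAL) x = ((x + 1) * Real.log x - 2 * (x - 1)) / (x ^ 2 * (Real.log x) ^ 3) ∧
      0 < ((x + 1) * Real.log x - 2 * (x - 1)) / (x ^ 2 * (Real.log x) ^ 3) :=
  ⟨deriv_deriv_fAL hx hx1, fALNumerator_div_pos hx hx1⟩
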